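/- arXiv:0706.4045 — 2 statements merged into one kernel-verified Lean document; each statement's English description precedes it below -/
import Mathlib

section
/- Let (X, μ) be a finite measure space and let p₁, p₂ : X → ℝ be measurable exponent functions with 1 ≤ p₂(x) ≤ p₁(x) ≤ P < ∞ for μ-almost every x, where P is a real constant. Then there exists a constant C > 0 such that for every measurable function f : X → ℝ, |f|_{p₂(·)} ≤ C · |f|_{p₁(·)}. -/
open MeasureTheory ENNReal

/-
If `∫ |f/m|^{p₁} ≤ 1`, then with `K = μ(X) + 1` the pointwise bound
`(t/K)^{p₂} ≤ (1 + t^{p₁})/K` (valid for `K ≥ 1`, `1 ≤ p₂ ≤ p₁`) integrates to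
`∫ |f/(K m)|^{p₂} ≤ (μ(X) + 1)/K = 1`. So `K m` is admissible for `|f|_{p₂(·)}` whenever `m` is
admissible for `|f|_{p₁(·)}`, and `C = K` works.
-/

/-- The Luxemburg norm `|f|_{p(·)} = inf { λ > 0 : ∫_X |f(x)/λ|^{p(x)} dμ ≤ 1 }`,
    with `inf ∅ = ∞`, as a value in `[0,∞]`. -/
noncomputable def luxNorm {X : Type*} [MeasurableSpace X] (μ : Measure X)
    (p : X → ℝ) (u : X → ℝ) : ℝ≥0∞ :=
  sInf {l : ℝ≥0∞ | ∃ m : ℝ, 0 < m ∧ l = ENNReal.ofReal m ∧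
    ∫⁻ x, ENNReal.ofReal (|u x / m| ^ p x) ∂μ ≤ 1}

lemma rpow_div_le_one_add_rpow_div {t K q r : ℝ} (ht : 0 ≤ t) (hK : 1 ≤ K) (hq : 1 ≤ q)
    (hqr : q ≤ r) : (t / K) ^ q ≤ (1 + t ^ r) / K := by
  have hK_le : K ≤ K ^ q := by
    simpa using Real.rpow_le_rpow_of_exponent_le hK hq
  have ht_le : t ^ q ≤ 1 + t ^ r := by
    rcases le_or_gt t 1 with h | h
    · linarith [Real.rpow_le_one ht h (by linarith : 0 ≤ q), Real.rpow_nonneg ht r]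
    · linarith [Real.rpow_le_rpow_of_exponent_le h.le hqr]
  calc (t / K) ^ q = t ^ q / K ^ q := Real.div_rpow ht (by linarith) q
    _ ≤ t ^ q / K := by gcongr
    _ ≤ (1 + t ^ r) / K := by gcongr

section

variable {X : Type*} [MeasurableSpace X] {μ : Measure X}

lemma luxNorm_le_ofReal {p : X → ℝ} {f : X → ℝ} {m : ℝ} (hm : 0 < m)
    (h : ∫⁻ x, ENNReal.ofReal (|f x / m| ^ p x) ∂μ ≤ 1) : luxNorm μ p f ≤ ENNReal.ofReal m :=
  sInf_le ⟨m, hm, rfl, h⟩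

lemma luxNorm_le_ofReal_mul {p q : X → ℝ} {f g : X → ℝ} {K : ℝ} (hK : 0 < K)
    (h : ∀ m, 0 < m → ∫⁻ x, ENNReal.ofReal (|f x / m| ^ p x) ∂μ ≤ 1 →
      ∫⁻ x, ENNReal.ofReal (|g x / (K * m)| ^ q x) ∂μ ≤ 1) :
    luxNorm μ q g ≤ ENNReal.ofReal K * luxNorm μ p f := by
  have hK₀ : ENNReal.ofReal K ≠ 0 := by simpa using hK
  rw [mul_comm, ← ENNReal.div_le_iff_le_mul (.inl hK₀) (.inl ofReal_ne_top)]
  refine le_sInf ?_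
  rintro _ ⟨m, hm, rfl, hint⟩
  rw [ENNReal.div_le_iff_le_mul (.inl hK₀) (.inl ofReal_ne_top), ← ENNReal.ofReal_mul hm.le,
    mul_comm]
  exact luxNorm_le_ofReal (by positivity) (h m hm hint)

lemma lintegral_rpow_div_mul_le {p q : X → ℝ} (hpq : ∀ᵐ x ∂μ, 1 ≤ q x ∧ q x ≤ p x)
    (f : X → ℝ) {K : ℝ} (hK : 1 ≤ K) (m : ℝ) :
    ∫⁻ x, ENNReal.ofReal (|f x / (K * m)| ^ q x) ∂μ ≤
      ENNReal.ofReal K⁻¹ * (μ Set.univ + ∫⁻ x, ENNReal.ofReal (|f x / m| ^ p x) ∂μ) := by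
  have hK₀ : 0 < K := by linarith
  have hpt : ∀ᵐ x ∂μ, ENNReal.ofReal (|f x / (K * m)| ^ q x) ≤
      ENNReal.ofReal K⁻¹ * (1 + ENNReal.ofReal (|f x / m| ^ p x)) := by
    filter_upwards [hpq] with x ⟨hq, hqp⟩
    have habs : |f x / (K * m)| = |f x / m| / K := by
      rw [mul_comm, ← div_div, abs_div, abs_of_pos hK₀]
    rw [habs, ← ENNReal.ofReal_one, ← ENNReal.ofReal_add zero_le_one (by positivity),
      ← ENNReal.ofReal_mul (by positivity), inv_mul_eq_div]
    exact ENNReal.ofReal_le_ofReal (rpow_div_le_one_add_rpow_div (abs_nonneg _) hK hq hqp)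
  calc ∫⁻ x, ENNReal.ofReal (|f x / (K * m)| ^ q x) ∂μ
      ≤ ∫⁻ x, ENNReal.ofReal K⁻¹ * (1 + ENNReal.ofReal (|f x / m| ^ p x)) ∂μ :=
        lintegral_mono_ae hpt
    _ = ENNReal.ofReal K⁻¹ * (μ Set.univ + ∫⁻ x, ENNReal.ofReal (|f x / m| ^ p x) ∂μ) := by
        rw [lintegral_const_mul' _ _ ofReal_ne_top, lintegral_add_left measurable_const,
          lintegral_one]

end

theorem stmt14_general {X : Type*} [MeasurableSpace X] (μ : Measure X) [IsFiniteMeasure μ]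
    (p₁ p₂ : X → ℝ) (P : ℝ)
    (hb : ∀ᵐ x ∂μ, 1 ≤ p₂ x ∧ p₂ x ≤ p₁ x ∧ p₁ x ≤ P) :
    ∃ C : ℝ, 0 < C ∧ ∀ f : X → ℝ, Measurable f →
      luxNorm μ p₂ f ≤ ENNReal.ofReal C * luxNorm μ p₁ f := by
  set K : ℝ := μ.real Set.univ + 1
  have hK : 1 ≤ K := by simp [K]
  have hμK : μ Set.univ + 1 = ENNReal.ofReal K := by
    rw [ENNReal.ofReal_add measureReal_nonneg zero_le_one, ofReal_measureReal, ofReal_one]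
  have hpq : ∀ᵐ x ∂μ, 1 ≤ p₂ x ∧ p₂ x ≤ p₁ x := hb.mono fun x hx ↦ ⟨hx.1, hx.2.1⟩
  refine ⟨K, by linarith, fun f _ ↦ luxNorm_le_ofReal_mul (by linarith) fun m _ hint ↦ ?_⟩
  calc ∫⁻ x, ENNReal.ofReal (|f x / (K * m)| ^ p₂ x) ∂μ
      ≤ ENNReal.ofReal K⁻¹ * (μ Set.univ + 1) :=
        (lintegral_rpow_div_mul_le hpq f hK m).trans (by gcongr)
    _ = 1 := by
        rw [hμK, ← ENNReal.ofReal_mul (by positivity), inv_mul_cancel₀ (by linarith),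
          ofReal_one]

/-- On a finite measure space, if `1 ≤ p₂(x) ≤ p₁(x) ≤ P < ∞` a.e., then there is
    `C > 0` such that `|f|_{p₂(·)} ≤ C |f|_{p₁(·)}` for every measurable `f`. -/
theorem stmt14 {X : Type*} [MeasurableSpace X] (μ : Measure X) [IsFiniteMeasure μ]
    (p₁ p₂ : X → ℝ) (hp₁ : Measurable p₁) (hp₂ : Measurable p₂) (P : ℝ)
    (hb : ∀ᵐ x ∂μ, 1 ≤ p₂ x ∧ p₂ x ≤ p₁ x ∧ p₁ x ≤ P) :
    ∃ C : ℝ, 0 < C ∧ ∀ f : X → ℝ, Measurable f →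
      luxNorm μ p₂ f ≤ ENNReal.ofReal C * luxNorm μ p₁ f :=
  stmt14_general μ p₁ p₂ P hb
end

section
/- Let Ω be a bounded open subset of ℝ^N (N ≥ 3) and let p₁, p₂, q : closure(Ω) → ℝ be continuous functions satisfying 1 < p₂(x) < q⁻ ≤ q⁺ < p₁(x) < N for all x ∈ closure(Ω), where q⁻ = min_{closure(Ω)} q and q⁺ = max_{closure(Ω)} q. Let λ₀ := inf { (∫_Ω (|Du|^{p₁(x)} + |Du|^{p₂(x)}) dx) / (∫_Ω |u|^{q(x)} dx) : u of class C¹ with compact support contained in Ω, u not identically zero }. Then for every λ with 0 < λ < λ₀ there is no function u : ℝ^N → ℝ of class C¹, not identically zero, with compact support contained in Ω, such that ∫_Ω (|Du(x)|^{p₁(x)−2} + |Du(x)|^{p₂(x)−2}) ⟨Du(x), Dv(x)⟩ dx = λ ∫_Ω |u(x)|^{q(x)−2} u(x) v(x) dx holds for every function v : ℝ^N → ℝ of class C¹ with compact support contained in Ω. -/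
open MeasureTheory ENNReal

/-- `J₁(u) = ∫_Ω (|Du|^{p₁(x)} + |Du|^{p₂(x)}) dx`, with `Du` the gradient of `u`. -/
noncomputable def Jone (N : ℕ) (Ω : Set (EuclideanSpace ℝ (Fin N)))
    (p₁ p₂ : EuclideanSpace ℝ (Fin N) → ℝ) (u : EuclideanSpace ℝ (Fin N) → ℝ) : ℝ≥0∞ :=
  ∫⁻ x in Ω, (ENNReal.ofReal (‖gradient u x‖ ^ p₁ x) +
    ENNReal.ofReal (‖gradient u x‖ ^ p₂ x))

/-- `I₁(u) = ∫_Ω |u|^{q(x)} dx`. -/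
noncomputable def Ione (N : ℕ) (Ω : Set (EuclideanSpace ℝ (Fin N)))
    (q : EuclideanSpace ℝ (Fin N) → ℝ) (u : EuclideanSpace ℝ (Fin N) → ℝ) : ℝ≥0∞ :=
  ∫⁻ x in Ω, ENNReal.ofReal (|u x| ^ q x)

/-- `λ₀ = inf { J₁(u)/I₁(u) : u ∈ C¹, compact support in Ω, u ≢ 0 }`. -/
noncomputable def lambdaZero (N : ℕ) (Ω : Set (EuclideanSpace ℝ (Fin N)))
    (p₁ p₂ q : EuclideanSpace ℝ (Fin N) → ℝ) : ℝ≥0∞ :=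
  sInf {r : ℝ≥0∞ | ∃ u : EuclideanSpace ℝ (Fin N) → ℝ,
    ContDiff ℝ 1 u ∧ HasCompactSupport u ∧ tsupport u ⊆ Ω ∧ u ≠ 0 ∧
    r = Jone N Ω p₁ p₂ u / Ione N Ω q u}

/-!
Testing the weak equation with `v = u` gives `J₁(u) = λ I₁(u)`, and `0 < I₁(u) < ∞` because
`u` is continuous, nonzero and bounded. Hence `λ₀ ≤ J₁(u) / I₁(u) = λ`.
-/

open Set InnerProductSpace

theorem Real.rpow_sub_two_mul_mul_self {t s : ℝ} (ht : 0 ≤ t) (hs : s ≠ 0) :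
    t ^ (s - 2) * (t * t) = t ^ s := by
  rcases ht.eq_or_lt with rfl | ht
  · simp [Real.zero_rpow hs]
  · rw [← sq, ← Real.rpow_two, ← Real.rpow_add ht, sub_add_cancel]

theorem integrableOn_rpow_of_le {α : Type*} [MeasurableSpace α] {μ : Measure α} {s : Set α}
    (hs : MeasurableSet s) (hμs : μ s ≠ ∞) {f p : α → ℝ} {M b : ℝ}
    (hf : AEMeasurable f (μ.restrict s)) (hp : AEMeasurable p (μ.restrict s))
    (hf0 : ∀ x, 0 ≤ f x) (hfM : ∀ x, f x ≤ M) (hpb : ∀ x ∈ s, p x ∈ Icc 0 b) :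
    IntegrableOn (fun x => f x ^ p x) s μ := by
  have : IsFiniteMeasure (μ.restrict s) := isFiniteMeasure_restrict.mpr hμs
  refine Integrable.mono' (integrable_const (max 1 M ^ b)) (hf.pow hp).aestronglyMeasurable ?_
  filter_upwards [ae_restrict_mem hs] with x hx
  rw [Real.norm_of_nonneg (Real.rpow_nonneg (hf0 x) _)]
  calc f x ^ p x ≤ max 1 M ^ p x :=
        Real.rpow_le_rpow (hf0 x) ((hfM x).trans (le_max_right _ _)) (hpb x hx).1
    _ ≤ max 1 M ^ b := Real.rpow_le_rpow_of_exponent_le (le_max_left _ _) (hpb x hx).2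

section Gradient

variable {F : Type*} [NormedAddCommGroup F] [InnerProductSpace ℝ F] [CompleteSpace F]
  {u : F → ℝ}

theorem ContDiff.continuous_gradient (hu : ContDiff ℝ 1 u) : Continuous (gradient u) :=
  (toDual ℝ F).symm.continuous.comp (hu.continuous_fderiv one_ne_zero)

theorem ContDiff.exists_norm_gradient_le (hu : ContDiff ℝ 1 u) (hcs : HasCompactSupport u) :
    ∃ M, ∀ x, ‖gradient u x‖ ≤ M := by
  obtain ⟨M, hM⟩ := (hu.continuous_fderiv one_ne_zero).bounded_above_of_compact_support
    (hcs.fderiv (𝕜 := ℝ))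
  exact ⟨M, fun x => by rw [gradient, LinearIsometryEquiv.norm_map]; exact hM x⟩

end Gradient

section Rayleigh

variable {N : ℕ} {Ω : Set (EuclideanSpace ℝ (Fin N))} {p₁ p₂ q u : EuclideanSpace ℝ (Fin N) → ℝ}

theorem Jone_eq_ofReal_integral
    (hint : IntegrableOn (fun x => ‖gradient u x‖ ^ p₁ x + ‖gradient u x‖ ^ p₂ x) Ω) :
    Jone N Ω p₁ p₂ u =
      ENNReal.ofReal (∫ x in Ω, ‖gradient u x‖ ^ p₁ x + ‖gradient u x‖ ^ p₂ x) := by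
  rw [Jone, ofReal_integral_eq_lintegral_ofReal hint (ae_of_all _ fun x => by positivity)]
  exact lintegral_congr fun x => (ENNReal.ofReal_add (by positivity) (by positivity)).symm

theorem Ione_eq_ofReal_integral (hint : IntegrableOn (fun x => |u x| ^ q x) Ω) :
    Ione N Ω q u = ENNReal.ofReal (∫ x in Ω, |u x| ^ q x) :=
  (ofReal_integral_eq_lintegral_ofReal hint (ae_of_all _ fun x => by positivity)).symm

theorem integral_rpow_abs_pos (hu : Continuous u) (hu0 : u ≠ 0) (hsupp : tsupport u ⊆ Ω)
    (hint : IntegrableOn (fun x => |u x| ^ q x) Ω) : 0 < ∫ x in Ω, |u x| ^ q x := by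
  rw [setIntegral_pos_iff_support_of_nonneg_ae (ae_of_all _ fun x => by positivity) hint]
  have hsub : Function.support u ⊆ Function.support (fun x => |u x| ^ q x) ∩ Ω :=
    fun x hx => ⟨(Real.rpow_pos_of_pos (abs_pos.mpr hx) _).ne', hsupp (subset_tsupport u hx)⟩
  exact (hu.isOpen_support.measure_pos volume (Function.support_nonempty_iff.mpr hu0)).trans_le
    (measure_mono hsub)

theorem lambdaZero_le_div (hu : ContDiff ℝ 1 u) (hcs : HasCompactSupport u)
    (hsupp : tsupport u ⊆ Ω) (hu0 : u ≠ 0) :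
    lambdaZero N Ω p₁ p₂ q ≤ Jone N Ω p₁ p₂ u / Ione N Ω q u :=
  sInf_le ⟨u, hu, hcs, hsupp, hu0, rfl⟩

theorem integral_rpow_norm_gradient_eq_of_weak_self (hΩ : MeasurableSet Ω)
    (hp₁ : ∀ x ∈ Ω, p₁ x ≠ 0) (hp₂ : ∀ x ∈ Ω, p₂ x ≠ 0) (hq : ∀ x ∈ Ω, q x ≠ 0) {l : ℝ}
    (hweak : ∫ x in Ω, (‖gradient u x‖ ^ (p₁ x - 2) + ‖gradient u x‖ ^ (p₂ x - 2)) *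
        (inner ℝ (gradient u x) (gradient u x) : ℝ) =
      l * ∫ x in Ω, |u x| ^ (q x - 2) * u x * u x) :
    ∫ x in Ω, ‖gradient u x‖ ^ p₁ x + ‖gradient u x‖ ^ p₂ x = l * ∫ x in Ω, |u x| ^ q x := by
  calc ∫ x in Ω, ‖gradient u x‖ ^ p₁ x + ‖gradient u x‖ ^ p₂ x
      = ∫ x in Ω, (‖gradient u x‖ ^ (p₁ x - 2) + ‖gradient u x‖ ^ (p₂ x - 2)) *
          (inner ℝ (gradient u x) (gradient u x) : ℝ) :=
        setIntegral_congr_fun hΩ fun x hx => by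
          rw [real_inner_self_eq_norm_mul_norm, add_mul,
            Real.rpow_sub_two_mul_mul_self (norm_nonneg _) (hp₁ x hx),
            Real.rpow_sub_two_mul_mul_self (norm_nonneg _) (hp₂ x hx)]
    _ = l * ∫ x in Ω, |u x| ^ (q x - 2) * u x * u x := hweak
    _ = l * ∫ x in Ω, |u x| ^ q x := congrArg (l * ·) <| setIntegral_congr_fun hΩ fun x hx => by
          rw [mul_assoc, ← abs_mul_abs_self (u x),
            Real.rpow_sub_two_mul_mul_self (abs_nonneg _) (hq x hx)]

theorem lambdaZero_le_of_weak_self (hΩ : MeasurableSet Ω) (hΩfin : volume Ω ≠ ∞)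
    (hp₁m : AEMeasurable p₁ (volume.restrict Ω)) (hp₂m : AEMeasurable p₂ (volume.restrict Ω))
    (hqm : AEMeasurable q (volume.restrict Ω)) {b : ℝ} (hp₁ : ∀ x ∈ Ω, p₁ x ∈ Ioc 0 b)
    (hp₂ : ∀ x ∈ Ω, p₂ x ∈ Ioc 0 b) (hq : ∀ x ∈ Ω, q x ∈ Ioc 0 b)
    (hu : ContDiff ℝ 1 u) (hcs : HasCompactSupport u) (hsupp : tsupport u ⊆ Ω) (hu0 : u ≠ 0)
    {l : ℝ} (hl : 0 ≤ l)
    (hweak : ∫ x in Ω, (‖gradient u x‖ ^ (p₁ x - 2) + ‖gradient u x‖ ^ (p₂ x - 2)) *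
        (inner ℝ (gradient u x) (gradient u x) : ℝ) =
      l * ∫ x in Ω, |u x| ^ (q x - 2) * u x * u x) :
    lambdaZero N Ω p₁ p₂ q ≤ ENNReal.ofReal l := by
  obtain ⟨M, hM⟩ := hu.exists_norm_gradient_le hcs
  obtain ⟨M', hM'⟩ := hu.continuous.bounded_above_of_compact_support hcs
  have hgradm : AEMeasurable (fun x => ‖gradient u x‖) (volume.restrict Ω) :=
    hu.continuous_gradient.norm.aemeasurable
  have hJint : IntegrableOn (fun x => ‖gradient u x‖ ^ p₁ x + ‖gradient u x‖ ^ p₂ x) Ω :=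
    (integrableOn_rpow_of_le hΩ hΩfin hgradm hp₁m (fun _ => norm_nonneg _) hM
        fun x hx => Ioc_subset_Icc_self (hp₁ x hx)).add
      (integrableOn_rpow_of_le hΩ hΩfin hgradm hp₂m (fun _ => norm_nonneg _) hM
        fun x hx => Ioc_subset_Icc_self (hp₂ x hx))
  have hIint : IntegrableOn (fun x => |u x| ^ q x) Ω :=
    integrableOn_rpow_of_le hΩ hΩfin hu.continuous.abs.aemeasurable hqm (fun _ => abs_nonneg _)
      hM' fun x hx => Ioc_subset_Icc_self (hq x hx)
  have hIpos := integral_rpow_abs_pos hu.continuous hu0 hsupp hIint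
  have henergy := integral_rpow_norm_gradient_eq_of_weak_self hΩ (fun x hx => (hp₁ x hx).1.ne')
    (fun x hx => (hp₂ x hx).1.ne') (fun x hx => (hq x hx).1.ne') hweak
  calc lambdaZero N Ω p₁ p₂ q ≤ Jone N Ω p₁ p₂ u / Ione N Ω q u :=
        lambdaZero_le_div hu hcs hsupp hu0
    _ = ENNReal.ofReal l := by
      rw [Jone_eq_ofReal_integral hJint, Ione_eq_ofReal_integral hIint, henergy,
        ENNReal.ofReal_mul hl, ENNReal.mul_div_cancel_right (ENNReal.ofReal_pos.mpr hIpos).ne'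
          ENNReal.ofReal_ne_top]

end Rayleigh

theorem stmt15_general (N : ℕ) (Ω : Set (EuclideanSpace ℝ (Fin N)))
    (hΩo : IsOpen Ω) (hΩb : Bornology.IsBounded Ω)
    (p₁ p₂ q : EuclideanSpace ℝ (Fin N) → ℝ)
    (hp₁ : ContinuousOn p₁ (closure Ω)) (hp₂ : ContinuousOn p₂ (closure Ω))
    (hq : ContinuousOn q (closure Ω))
    (qm qp : ℝ) (hqm : IsLeast (q '' closure Ω) qm)
    (hqp : IsGreatest (q '' closure Ω) qp)
    (hcond : ∀ x ∈ closure Ω, 1 < p₂ x ∧ p₂ x < qm ∧ qp < p₁ x ∧ p₁ x < N) :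
    ∀ l : ℝ, 0 < l → ENNReal.ofReal l < lambdaZero N Ω p₁ p₂ q →
      ¬ ∃ u : EuclideanSpace ℝ (Fin N) → ℝ,
        ContDiff ℝ 1 u ∧ HasCompactSupport u ∧ tsupport u ⊆ Ω ∧ u ≠ 0 ∧
        ∀ v : EuclideanSpace ℝ (Fin N) → ℝ,
          ContDiff ℝ 1 v → HasCompactSupport v → tsupport v ⊆ Ω →
          ∫ x in Ω, (‖gradient u x‖ ^ (p₁ x - 2) + ‖gradient u x‖ ^ (p₂ x - 2)) *
              (inner ℝ (gradient u x) (gradient v x) : ℝ) =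
            l * ∫ x in Ω, |u x| ^ (q x - 2) * u x * v x := by
  rintro l hl hlt ⟨u, hu, hcs, hsupp, hu0, hweak⟩
  have hΩ := hΩo.measurableSet
  have hexp : ∀ x ∈ Ω, p₁ x ∈ Ioc 0 (N : ℝ) ∧ p₂ x ∈ Ioc 0 (N : ℝ) ∧ q x ∈ Ioc 0 (N : ℝ) := by
    intro x hx
    obtain ⟨h₁, h₂, h₃, h₄⟩ := hcond x (subset_closure hx)
    have hqx₁ := hqm.2 ⟨x, subset_closure hx, rfl⟩
    have hqx₂ := hqp.2 ⟨x, subset_closure hx, rfl⟩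
    refine ⟨⟨?_, ?_⟩, ⟨?_, ?_⟩, ⟨?_, ?_⟩⟩ <;> linarith
  refine (lambdaZero_le_of_weak_self hΩ hΩb.measure_lt_top.ne
    ((hp₁.mono subset_closure).aemeasurable hΩ) ((hp₂.mono subset_closure).aemeasurable hΩ)
    ((hq.mono subset_closure).aemeasurable hΩ) (fun x hx => (hexp x hx).1)
    (fun x hx => (hexp x hx).2.1) (fun x hx => (hexp x hx).2.2) hu hcs hsupp hu0 hl.le
    (hweak u hu hcs hsupp)).not_gt hlt

/-- No `λ ∈ (0, λ₀)` is an eigenvalue of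
    `−div((|∇u|^{p₁(x)−2} + |∇u|^{p₂(x)−2})∇u) = λ|u|^{q(x)−2}u` with a `C¹`
    eigenfunction of compact support in `Ω`, in the weak sense tested against all
    `C¹` functions with compact support in `Ω`. -/
theorem stmt15 (N : ℕ) (hN : 3 ≤ N) (Ω : Set (EuclideanSpace ℝ (Fin N)))
    (hΩo : IsOpen Ω) (hΩb : Bornology.IsBounded Ω)
    (p₁ p₂ q : EuclideanSpace ℝ (Fin N) → ℝ)
    (hp₁ : ContinuousOn p₁ (closure Ω)) (hp₂ : ContinuousOn p₂ (closure Ω))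
    (hq : ContinuousOn q (closure Ω))
    (qm qp : ℝ) (hqm : IsLeast (q '' closure Ω) qm)
    (hqp : IsGreatest (q '' closure Ω) qp)
    (hcond : ∀ x ∈ closure Ω, 1 < p₂ x ∧ p₂ x < qm ∧ qp < p₁ x ∧ p₁ x < N) :
    ∀ l : ℝ, 0 < l → ENNReal.ofReal l < lambdaZero N Ω p₁ p₂ q →
      ¬ ∃ u : EuclideanSpace ℝ (Fin N) → ℝ,
        ContDiff ℝ 1 u ∧ HasCompactSupport u ∧ tsupport u ⊆ Ω ∧ u ≠ 0 ∧
        ∀ v : EuclideanSpace ℝ (Fin N) → ℝ,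
          ContDiff ℝ 1 v → HasCompactSupport v → tsupport v ⊆ Ω →
          ∫ x in Ω, (‖gradient u x‖ ^ (p₁ x - 2) + ‖gradient u x‖ ^ (p₂ x - 2)) *
              (inner ℝ (gradient u x) (gradient v x) : ℝ) =
            l * ∫ x in Ω, |u x| ^ (q x - 2) * u x * v x :=
  stmt15_general N Ω hΩo hΩb p₁ p₂ q hp₁ hp₂ hq qm qp hqm hqp hcond
end
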